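/- arXiv:math/9604202 — 2 statements merged into one kernel-verified Lean document; each statement's English description precedes it below -/
import Mathlib

section
/- Fix an integer k. Let H ⊆ L²(∂Δ, ℂ) be the Hardy subspace of functions whose Fourier coefficients of negative index vanish. Then the ℝ-linear map p_k : H → L²(∂Δ, ℂ) defined by p_k(w)(ζ) = w(ζ) + ζ^k · conj(w(ζ)) has closed range. Indeed, identifying L² with ℓ² via Fourier coefficients (b_m)_{m∈ℤ}, the range of p_k is exactly the set of sequences arising from elements w with w_m = 0 for m < 0 under a_m ↦ a_m + conj(a_{k-m}), described by the closed conditions b_{k-m} = conj(b_m) together with appropriate vanishing conditions. -/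
open MeasureTheory Complex Real

local instance : Fact (0 < 2 * π) := ⟨Real.two_pi_pos⟩

/-!
In Fourier coefficients, `p_k` is `a ↦ (a n + conj (a (k - n)))ₙ`. Its image on sequences
supported in `ℕ` is cut out by the symmetry `b (k - n) = conj (b n)` and the vanishing of `b n`
when both `n` and `k - n` are negative: given such a `b`, the sequence `a n = c n * b n` is a
preimage, where the weight `c n = reflectWeight k n` is `0`, `1/2` or `1` according as `n < 0`,
`0 ≤ n ≤ k` or `k < n`, so that `c n + c (k - n) = 1` unless both indices are negative. Each
condition involves at most two coefficients, and coefficients are continuous on `L²`, so the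
image is closed.
-/

open ComplexConjugate

noncomputable def reflectWeight (k n : ℤ) : ℝ :=
  if n < 0 then 0 else if n ≤ k then 1 / 2 else 1

theorem reflectWeight_add_reflectWeight {k n : ℤ} (h : 0 ≤ n ∨ 0 ≤ k - n) :
    reflectWeight k n + reflectWeight k (k - n) = 1 := by
  unfold reflectWeight
  split_ifs <;> (try norm_num) <;> omega

theorem norm_reflectWeight_mul_le (k n : ℤ) (z : ℂ) : ‖(reflectWeight k n : ℂ) * z‖ ≤ ‖z‖ := by
  rw [norm_mul, norm_real, Real.norm_eq_abs]
  refine mul_le_of_le_one_left (norm_nonneg z) ?_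
  unfold reflectWeight
  split_ifs <;> norm_num

theorem exists_add_conj_reflect_eq {k : ℤ} {b : ℤ → ℂ} (hb : Memℓp b 2)
    (hsymm : ∀ n, b (k - n) = conj (b n)) (hzero : ∀ n, n < 0 → k - n < 0 → b n = 0) :
    ∃ a : ℤ → ℂ, Memℓp a 2 ∧ (∀ n, n < 0 → a n = 0) ∧ ∀ n, a n + conj (a (k - n)) = b n := by
  refine ⟨fun n => reflectWeight k n * b n, hb.mono' fun n => norm_reflectWeight_mul_le k n _,
    fun n hn => by simp [reflectWeight, hn], fun n => ?_⟩
  by_cases h : 0 ≤ n ∨ 0 ≤ k - n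
  · calc _ = ((reflectWeight k n + reflectWeight k (k - n) : ℝ) : ℂ) * b n := by
          simp only [map_mul, conj_ofReal, hsymm, conj_conj]; push_cast; ring
      _ = b n := by rw [reflectWeight_add_reflectWeight h, ofReal_one, one_mul]
  · simp only [not_or, not_le] at h
    simp [reflectWeight, h.1, h.2, hzero n h.1 h.2]

section FourierCoeff

variable {T : ℝ} [Fact (0 < T)]

theorem fourierCoeff_fourier_mul_conj (k n : ℤ) (f : AddCircle T → ℂ) :
    fourierCoeff (fun x => fourier k x * conj (f x)) n = conj (fourierCoeff f (k - n)) := by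
  rw [fourierCoeff, fourierCoeff, ← integral_conj]
  congr 1
  funext x
  rw [smul_eq_mul, smul_eq_mul, map_mul, ← fourier_neg, neg_neg, ← mul_assoc, ← fourier_add,
    neg_add_eq_sub]

theorem MeasureTheory.MemLp.fourier_mul_conj {p : ENNReal} {f : AddCircle T → ℂ}
    (hf : MemLp f p AddCircle.haarAddCircle) (k : ℤ) :
    MemLp (fun x => fourier k x * conj (f x)) p AddCircle.haarAddCircle :=
  hf.congr_norm ((map_continuous (fourier k)).aestronglyMeasurable.mul
      (continuous_conj.comp_aestronglyMeasurable hf.aestronglyMeasurable))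
    (ae_of_all _ fun x => by rw [norm_mul, fourier_apply, Circle.norm_coe, one_mul, norm_conj])

theorem fourierCoeff_add_fourier_mul_conj {f : AddCircle T → ℂ}
    (hf : Integrable f AddCircle.haarAddCircle) (k n : ℤ) :
    fourierCoeff (fun x => f x + fourier k x * conj (f x)) n
      = fourierCoeff f n + conj (fourierCoeff f (k - n)) := by
  have hconj := ((memLp_one_iff_integrable.2 hf).fourier_mul_conj k).integrable le_rfl
  rw [← fourierCoeff_fourier_mul_conj]
  exact congrFun (fourierCoeff.add hf hconj) n

theorem continuous_fourierCoeff (n : ℤ) :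
    Continuous fun f : Lp ℂ 2 (@AddCircle.haarAddCircle T _) => fourierCoeff f n := by
  simp_rw [← fourierBasis_repr, fourierBasis.repr_apply_apply]
  exact continuous_const.inner continuous_id

theorem memℓp_fourierCoeff (f : Lp ℂ 2 (@AddCircle.haarAddCircle T _)) :
    Memℓp (fourierCoeff f) 2 := by
  rw [← funext (fourierBasis_repr f)]
  exact lp.memℓp _

theorem exists_Lp_fourierCoeff_eq {a : ℤ → ℂ} (ha : Memℓp a 2) :
    ∃ f : Lp ℂ 2 (@AddCircle.haarAddCircle T _), ∀ n, fourierCoeff f n = a n :=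
  ⟨fourierBasis.repr.symm ⟨a, ha⟩, fun n => by
    rw [← fourierBasis_repr, LinearIsometryEquiv.apply_symm_apply]⟩

theorem MeasureTheory.Lp.eq_of_fourierCoeff_eq {f g : Lp ℂ 2 (@AddCircle.haarAddCircle T _)}
    (h : ∀ n, fourierCoeff f n = fourierCoeff g n) : f = g :=
  fourierBasis.repr.injective <| lp.ext <| funext fun n => by simp only [fourierBasis_repr, h]

theorem setOf_hardy_add_fourier_mul_conj_eq (k : ℤ) :
    {g : Lp ℂ 2 (@AddCircle.haarAddCircle T _) |
      ∃ w : Lp ℂ 2 (@AddCircle.haarAddCircle T _),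
        (∀ n : ℤ, n < 0 → fourierCoeff (w : AddCircle T → ℂ) n = 0) ∧
        (g : AddCircle T → ℂ) =ᵐ[AddCircle.haarAddCircle]
          fun x => (w : AddCircle T → ℂ) x + fourier k x * conj ((w : AddCircle T → ℂ) x)}
      = {g : Lp ℂ 2 (@AddCircle.haarAddCircle T _) |
          ∀ n, fourierCoeff (g : AddCircle T → ℂ) (k - n) = conj (fourierCoeff g n)} ∩
        {g : Lp ℂ 2 (@AddCircle.haarAddCircle T _) |
          ∀ n, n < 0 → k - n < 0 → fourierCoeff (g : AddCircle T → ℂ) n = 0} := by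
  ext g
  constructor
  · rintro ⟨w, hw, hg⟩
    have hcoeff n : fourierCoeff g n = fourierCoeff w n + conj (fourierCoeff w (k - n)) := by
      rw [fourierCoeff_congr_ae hg,
        fourierCoeff_add_fourier_mul_conj ((Lp.memLp w).integrable one_le_two)]
    refine ⟨fun n => ?_, fun n hn hkn => ?_⟩
    · rw [hcoeff, hcoeff, sub_sub_cancel, map_add, conj_conj, add_comm]
    · rw [hcoeff, hw n hn, hw _ hkn, map_zero, add_zero]
  · rintro ⟨hsymm, hzero⟩
    obtain ⟨a, ha, ha_neg, hab⟩ := exists_add_conj_reflect_eq (memℓp_fourierCoeff g) hsymm hzero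
    obtain ⟨w, hwa⟩ := exists_Lp_fourierCoeff_eq (T := T) ha
    have hp : MemLp (fun x => w x + fourier k x * conj (w x)) 2 AddCircle.haarAddCircle :=
      (Lp.memLp w).add ((Lp.memLp w).fourier_mul_conj k)
    have hg : g = hp.toLp _ := Lp.eq_of_fourierCoeff_eq fun n => by
      rw [fourierCoeff_congr_ae hp.coeFn_toLp,
        fourierCoeff_add_fourier_mul_conj ((Lp.memLp w).integrable one_le_two), hwa, hwa, hab]
    refine ⟨w, fun n hn => by rw [hwa, ha_neg n hn], ?_⟩
    rw [hg]
    exact hp.coeFn_toLp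

end FourierCoeff

/-- the ℝ-linear map `p_k : H → L²(∂Δ, ℂ)`,
`p_k(w)(ζ) = w(ζ) + ζ^k conj (w ζ)`, defined on the Hardy space `H`
(elements of `L²` of the circle with vanishing negative Fourier coefficients),
has closed range. The circle is realized as `AddCircle (2π)` with Haar measure,
and `ζ^k` as the character `fourier k`. -/
theorem stmt2 (k : ℤ) :
    IsClosed {g : Lp ℂ 2 (@AddCircle.haarAddCircle (2 * π) _) |
      ∃ w : Lp ℂ 2 (@AddCircle.haarAddCircle (2 * π) _),
        (∀ n : ℤ, n < 0 → fourierCoeff (w : AddCircle (2 * π) → ℂ) n = 0) ∧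
        (g : AddCircle (2 * π) → ℂ) =ᵐ[AddCircle.haarAddCircle]
          fun x => (w : AddCircle (2 * π) → ℂ) x +
            fourier k x * starRingEnd ℂ ((w : AddCircle (2 * π) → ℂ) x)} := by
  rw [setOf_hardy_add_fourier_mul_conj_eq]
  simp only [Set.ofPred_forall]
  exact (isClosed_iInter fun n => isClosed_eq (continuous_fourierCoeff _)
      (continuous_conj.comp (continuous_fourierCoeff n))).inter
    (isClosed_iInter fun n => isClosed_iInter fun _ => isClosed_iInter fun _ =>
      isClosed_eq (continuous_fourierCoeff n) continuous_const)
end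

section
/- Let f be holomorphic on the open unit disc, Hölder continuous of exponent β > 1/2 on the closed disc, with f(0) = 0 and Re(f(−1)) = 0. Then i·Im((1/2π)∫₀^{2π} f(e^{iθ})/(1 + e^{iθ}) dθ) = −f(−1)/2. More precisely, (1/2π)∫₀^{2π} (f(ζ) − f(−1))/(1 + ζ) dθ = −f(−1) (interpreted as an L¹ integral, ζ = e^{iθ}) and f(−1)·Re((1/2π)∫₀^{2π} 1/(1 + e^{iθ}) dθ) = f(−1)/2. -/
open Complex Metric MeasureTheory Real intervalIntegral
open scoped NNReal

/-!
For `ε > 0` the function `z ↦ (f z - f (-1)) / (1 + ε + z)` is holomorphic on the disc and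
continuous on its closure, so by the mean value property its average over the unit circle is
`(f 0 - f (-1)) / (1 + ε)`. As `ε → 0⁺` the integrands are dominated by `K ‖1 + e^{iθ}‖ ^ (r - 1)`,
where `r ≤ 1` is a Hölder exponent of `f` (a Hölder exponent `β > 1/2` can be lowered to `1/2`
on the bounded disc), and this bound is integrable since `‖1 + e^{iθ}‖ ≥ (2/π) |π - θ|` on
`[0, 2π]` by Jordan's inequality. Dominated convergence gives the first identity. The other two
follow from `Re (1 / (1 + ζ)) = 1/2` for `‖ζ‖ = 1`, `ζ ≠ -1`, and from `f (-1)` being purely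
imaginary.
-/

lemma holderOnWith_of_norm_sub_le {E F : Type*} [SeminormedAddCommGroup E]
    [SeminormedAddCommGroup F] {f : E → F} {s : Set E} {C β : ℝ} (hβ : 0 ≤ β)
    (h : ∀ z ∈ s, ∀ w ∈ s, ‖f z - f w‖ ≤ C * ‖z - w‖ ^ β) :
    HolderOnWith C.toNNReal β.toNNReal f s := by
  intro z hz w hw
  rw [edist_dist, edist_dist, Real.coe_toNNReal _ hβ, ENNReal.ofReal_rpow_of_nonneg dist_nonneg hβ,
    ← ENNReal.ofReal_coe_nnreal, ← ENNReal.ofReal_mul (by positivity), dist_eq_norm, dist_eq_norm]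
  refine ENNReal.ofReal_le_ofReal ((h z hz w hw).trans ?_)
  exact mul_le_mul_of_nonneg_right (le_max_left _ _) (by positivity)

lemma norm_one_add_exp_mul_I (θ : ℝ) : ‖1 + exp (θ * I)‖ = 2 * |Real.cos (θ / 2)| := by
  have h : 1 + exp (θ * I) = exp ((θ / 2 : ℝ) * I) * (2 * Complex.cos (θ / 2 : ℝ)) := by
    rw [two_cos, mul_add, ← Complex.exp_add, ← Complex.exp_add]
    push_cast
    ring_nf
    simp [add_comm]
  rw [h, norm_mul, norm_exp_ofReal_mul_I, one_mul, ← ofReal_cos, norm_mul, norm_real,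
    Real.norm_eq_abs]
  norm_num

lemma two_div_pi_mul_abs_pi_sub_le_norm_one_add_exp {θ : ℝ} (h0 : 0 ≤ θ) (h2 : θ ≤ 2 * π) :
    2 / π * |π - θ| ≤ ‖1 + exp (θ * I)‖ := by
  have hx : |(π - θ) / 2| ≤ π / 2 := by
    rw [abs_le]; constructor <;> linarith
  have hcos : Real.cos (θ / 2) = Real.sin ((π - θ) / 2) := by
    rw [← Real.sin_pi_div_two_sub]; ring_nf
  rw [norm_one_add_exp_mul_I, hcos, abs_sin_eq_sin_abs_of_abs_le_pi (by linarith [pi_pos])]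
  have := mul_le_sin (abs_nonneg _) hx
  rw [abs_div, abs_two] at this ⊢
  linarith

lemma ae_exp_mul_I_ne_neg_one : ∀ᵐ θ : ℝ, exp (θ * I) ≠ -1 := by
  rw [ae_iff]
  refine measure_mono_null (fun θ hθ => ?_)
    ((Set.countable_range fun n : ℤ => π + n * (2 * π)).measure_zero volume)
  have hθ : exp (θ * I) = exp (π * I) := by simpa [exp_pi_mul_I] using hθ
  obtain ⟨n, hn⟩ := exp_eq_exp_iff_exists_int.1 hθ
  exact ⟨n, by simpa using (congrArg Complex.im hn).symm⟩

lemma re_one_div_one_add_of_norm_eq_one {w : ℂ} (hw : ‖w‖ = 1) (hw1 : w ≠ -1) :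
    (1 / (1 + w)).re = 1 / 2 := by
  have hsq : w.re * w.re + w.im * w.im = 1 := by
    rw [← normSq_apply, normSq_eq_norm_sq, hw, one_pow]
  have hre : 1 + w.re ≠ 0 := by
    intro h
    apply hw1
    apply Complex.ext <;> simp <;> nlinarith
  rw [one_div, inv_re, normSq_apply]
  simp only [add_re, one_re, add_im, one_im, zero_add]
  field_simp
  linear_combination -hsq

lemma intervalIntegrable_abs_rpow {s : ℝ} (hs : -1 < s) (a b : ℝ) :
    IntervalIntegrable (fun x : ℝ => |x| ^ s) volume a b := by
  have := (intervalIntegrable_cpow' (a := a) (b := b) (r := s) (by simpa)).norm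
  simpa [norm_cpow_real] using this

lemma intervalIntegrable_norm_one_add_exp_rpow {s : ℝ} (hs : -1 < s) (hs0 : s ≤ 0) :
    IntervalIntegrable (fun θ : ℝ => ‖1 + exp (θ * I)‖ ^ s) volume 0 (2 * π) := by
  have hdom : IntervalIntegrable (fun θ : ℝ => (2 / π) ^ s * |π - θ| ^ s) volume 0 (2 * π) := by
    have := (intervalIntegrable_abs_rpow hs π (-π)).comp_sub_left π
    simp only [sub_self, sub_neg_eq_add, ← two_mul] at this
    exact this.const_mul _
  have hmeas : Measurable fun θ : ℝ => ‖1 + exp (θ * I)‖ ^ s := by fun_prop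
  refine hdom.mono_fun' hmeas.aestronglyMeasurable ?_
  rw [Set.uIoc_of_le (by positivity)]
  filter_upwards [ae_restrict_of_ae (Measure.ae_ne volume π),
    ae_restrict_mem measurableSet_Ioc] with θ hθ hmem
  have hpos : 0 < 2 / π * |π - θ| := by
    have := pi_pos
    have := abs_pos.2 (sub_ne_zero.2 (Ne.symm hθ))
    positivity
  rw [Real.norm_of_nonneg (by positivity), ← Real.mul_rpow (by positivity) (abs_nonneg _)]
  exact rpow_le_rpow_of_nonpos hpos
    (two_div_pi_mul_abs_pi_sub_le_norm_one_add_exp hmem.1.le hmem.2) hs0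

lemma norm_le_norm_ofReal_add {w : ℂ} (hw : 0 ≤ w.re) {ε : ℝ} (hε : 0 ≤ ε) :
    ‖w‖ ≤ ‖(ε : ℂ) + w‖ := by
  rw [norm_def, norm_def]
  gcongr
  simp only [normSq_apply, add_re, add_im, ofReal_re, ofReal_im, zero_add]
  nlinarith

lemma neg_one_le_re_of_mem_closedBall {z : ℂ} (hz : z ∈ closedBall (0 : ℂ) 1) : -1 ≤ z.re :=
  (abs_le.1 ((abs_re_le_norm z).trans (by simpa using hz))).1

lemma one_add_ofReal_add_ne_zero {ε : ℝ} (hε : 0 < ε) {z : ℂ} (hz : z ∈ closedBall (0 : ℂ) 1) :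
    1 + ε + z ≠ 0 := by
  intro h
  have := congrArg re h
  simp only [add_re, one_re, ofReal_re, zero_re] at this
  linarith [neg_one_le_re_of_mem_closedBall hz]

lemma integral_comp_exp_mul_I_of_diffContOnCl {E : Type*} [NormedAddCommGroup E] [NormedSpace ℂ E]
    [CompleteSpace E] {h : ℂ → E} (hh : DiffContOnCl ℂ h (ball 0 1)) :
    ∫ θ in 0..2 * π, h (exp (θ * I)) = (2 * π) • h 0 := by
  have := DiffContOnCl.circleAverage (R := 1) (by rwa [abs_one])
  rw [circleAverage_def] at this
  simp only [circleMap_zero, ofReal_one, one_mul] at this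
  rw [← this, smul_inv_smul₀ (by positivity)]

section HolderBoundary

open Filter Topology

variable {f : ℂ → ℂ} {K r : ℝ≥0}

lemma exp_mul_I_mem_closedBall (θ : ℝ) : exp (θ * I) ∈ closedBall (0 : ℂ) 1 := by
  simp [norm_exp_ofReal_mul_I]

lemma norm_sub_div_one_add_ofReal_add_le (hf : HolderOnWith K r f (closedBall 0 1)) {w : ℂ}
    (hw : w ∈ closedBall (0 : ℂ) 1) {ε : ℝ} (hε : 0 ≤ ε) :
    ‖(f w - f (-1)) / (1 + ε + w)‖ ≤ K * ‖1 + w‖ ^ ((r : ℝ) - 1) := by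
  rcases eq_or_ne w (-1) with rfl | hw1
  · simp only [sub_self, zero_div, norm_zero]
    positivity
  have hpos : 0 < ‖1 + w‖ := norm_pos_iff.2 fun h => hw1 (by linear_combination h)
  have hnum : ‖f w - f (-1)‖ ≤ K * ‖1 + w‖ ^ (r : ℝ) := by
    simpa [dist_eq_norm, add_comm] using hf.dist_le hw (by simp : (-1 : ℂ) ∈ closedBall 0 1)
  have hden : ‖1 + w‖ ≤ ‖1 + ε + w‖ := by
    have hre : 0 ≤ (1 + w).re := by
      simp only [add_re, one_re]
      linarith [neg_one_le_re_of_mem_closedBall hw]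
    have h := norm_le_norm_ofReal_add hre hε
    rwa [← add_assoc, add_comm (ε : ℂ)] at h
  calc ‖(f w - f (-1)) / (1 + ε + w)‖ = ‖f w - f (-1)‖ / ‖1 + ε + w‖ := norm_div _ _
    _ ≤ K * ‖1 + w‖ ^ (r : ℝ) / ‖1 + w‖ := div_le_div₀ (by positivity) hnum hpos hden
    _ = K * ‖1 + w‖ ^ ((r : ℝ) - 1) := by rw [rpow_sub_one hpos.ne']; ring

lemma continuous_comp_exp_mul_I (hc : ContinuousOn f (closedBall 0 1)) :
    Continuous fun θ : ℝ => f (exp (θ * I)) :=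
  hc.comp_continuous (by fun_prop) exp_mul_I_mem_closedBall

lemma intervalIntegrable_sub_div_one_add_exp (hf : HolderOnWith K r f (closedBall 0 1))
    (hr0 : 0 < r) (hr1 : r ≤ 1) :
    IntervalIntegrable (fun θ : ℝ => (f (exp (θ * I)) - f (-1)) / (1 + exp (θ * I)))
      volume 0 (2 * π) := by
  have hr0' : (0 : ℝ) < r := hr0
  have hr1' : (r : ℝ) ≤ 1 := hr1
  have hbound := (intervalIntegrable_norm_one_add_exp_rpow (s := r - 1) (by linarith)
    (by linarith)).const_mul (K : ℝ)
  refine hbound.mono_fun' ?_ (ae_of_all _ fun θ => ?_)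
  · exact (((continuous_comp_exp_mul_I (hf.continuousOn hr0)).measurable.sub_const _).div
      (by fun_prop)).aestronglyMeasurable
  · simpa using norm_sub_div_one_add_ofReal_add_le hf (exp_mul_I_mem_closedBall θ) le_rfl

lemma integral_sub_div_one_add_ofReal_add_exp (hd : DifferentiableOn ℂ f (ball 0 1))
    (hc : ContinuousOn f (closedBall 0 1)) {ε : ℝ} (hε : 0 < ε) :
    ∫ θ in 0..2 * π, (f (exp (θ * I)) - f (-1)) / (1 + ε + exp (θ * I))
      = 2 * π * ((f 0 - f (-1)) / (1 + ε)) := by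
  have hne := fun z (hz : z ∈ closedBall (0 : ℂ) 1) => one_add_ofReal_add_ne_zero hε hz
  have hh : DiffContOnCl ℂ (fun z => (f z - f (-1)) / (1 + ε + z)) (ball 0 1) :=
    ⟨(hd.sub (differentiableOn_const _)).div (by fun_prop)
        fun z hz => hne z (ball_subset_closedBall hz),
      by rw [closure_ball 0 one_ne_zero]; exact (hc.sub continuousOn_const).div (by fun_prop) hne⟩
  rw [integral_comp_exp_mul_I_of_diffContOnCl hh, add_zero, real_smul]
  push_cast
  ring

lemma integral_sub_div_one_add_exp (hd : DifferentiableOn ℂ f (ball 0 1))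
    (hf : HolderOnWith K r f (closedBall 0 1)) (hr0 : 0 < r) (hr1 : r ≤ 1) :
    ∫ θ in 0..2 * π, (f (exp (θ * I)) - f (-1)) / (1 + exp (θ * I))
      = 2 * π * (f 0 - f (-1)) := by
  have hc := hf.continuousOn hr0
  have hr0' : (0 : ℝ) < r := hr0
  have hr1' : (r : ℝ) ≤ 1 := hr1
  let F : ℝ → ℝ → ℂ := fun ε θ => (f (exp (θ * I)) - f (-1)) / (1 + ε + exp (θ * I))
  have hlim : Tendsto (fun ε => ∫ θ in 0..2 * π, F ε θ) (𝓝[>] 0)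
      (𝓝 (∫ θ in 0..2 * π, (f (exp (θ * I)) - f (-1)) / (1 + exp (θ * I)))) := by
    refine tendsto_integral_filter_of_dominated_convergence
      (fun θ => K * ‖1 + exp (θ * I)‖ ^ ((r : ℝ) - 1)) ?_ ?_ ?_ ?_
    · exact Eventually.of_forall fun ε =>
        (((continuous_comp_exp_mul_I hc).measurable.sub_const _).div
          (by fun_prop)).aestronglyMeasurable
    · exact eventually_nhdsWithin_of_forall fun ε hε => ae_of_all _ fun θ _ =>
        norm_sub_div_one_add_ofReal_add_le hf (exp_mul_I_mem_closedBall θ) (le_of_lt hε)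
    · exact (intervalIntegrable_norm_one_add_exp_rpow (by linarith) (by linarith)).const_mul _
    · filter_upwards [ae_exp_mul_I_ne_neg_one] with θ hθ _
      have hθ' : 1 + (0 : ℝ) + exp (θ * I) ≠ 0 := by
        push_cast
        exact fun h => hθ (by linear_combination h)
      have : ContinuousAt (fun ε : ℝ => F ε θ) 0 := by fun_prop (disch := exact hθ')
      simpa [F] using this.tendsto.mono_left nhdsWithin_le_nhds
  have hval : Tendsto (fun ε => ∫ θ in 0..2 * π, F ε θ) (𝓝[>] 0)
      (𝓝 (2 * π * (f 0 - f (-1)))) := by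
    have : ContinuousAt (fun ε : ℝ => 2 * π * ((f 0 - f (-1)) / (1 + ε))) 0 := by
      fun_prop (disch := norm_num)
    have h0 := this.tendsto.mono_left (nhdsWithin_le_nhds (s := Set.Ioi 0))
    simp only [ofReal_zero, add_zero, div_one] at h0
    refine h0.congr' (eventually_nhdsWithin_of_forall ?_)
    exact fun ε hε => (integral_sub_div_one_add_ofReal_add_exp hd hc hε).symm
  exact tendsto_nhds_unique hlim hval

end HolderBoundary

lemma ae_re_one_div_one_add_exp : ∀ᵐ θ : ℝ, ((1 : ℂ) / (1 + exp (θ * I))).re = 1 / 2 := by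
  filter_upwards [ae_exp_mul_I_ne_neg_one] with θ hθ
  exact re_one_div_one_add_of_norm_eq_one (norm_exp_ofReal_mul_I θ) hθ

lemma integral_re_one_div_one_add_exp :
    ∫ θ in 0..2 * π, ((1 : ℂ) / (1 + exp (θ * I))).re = π := by
  rw [integral_congr_ae (ae_re_one_div_one_add_exp.mono fun θ h _ => h)]
  simp only [intervalIntegral.integral_const, sub_zero, smul_eq_mul]
  ring

lemma integral_im_div_one_add_exp {u : ℝ → ℂ} {c : ℂ} (hc : c.re = 0)
    (hu : IntervalIntegrable (fun θ : ℝ => (u θ - c) / (1 + exp (θ * I))) volume 0 (2 * π)) :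
    ∫ θ in 0..2 * π, (u θ / (1 + exp (θ * I))).im
      = (∫ θ in 0..2 * π, (u θ - c) / (1 + exp (θ * I))).im + π * c.im := by
  have hsplit : ∀ᵐ θ : ℝ, θ ∈ Set.uIoc 0 (2 * π) → (u θ / (1 + exp (θ * I))).im
      = ((u θ - c) / (1 + exp (θ * I))).im + c.im / 2 := by
    filter_upwards [ae_exp_mul_I_ne_neg_one, ae_re_one_div_one_add_exp] with θ hθ hre _
    have hne : 1 + exp (θ * I) ≠ 0 := fun h => hθ (by linear_combination h)
    have : u θ / (1 + exp (θ * I))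
        = (u θ - c) / (1 + exp (θ * I)) + c * (1 / (1 + exp (θ * I))) := by
      field_simp
      ring
    rw [this, add_im, mul_im, hre, hc]
    ring
  have him : ∫ θ in 0..2 * π, ((u θ - c) / (1 + exp (θ * I))).im
      = (∫ θ in 0..2 * π, (u θ - c) / (1 + exp (θ * I))).im :=
    intervalIntegral_im hu
  have hIm : IntervalIntegrable (fun θ : ℝ => ((u θ - c) / (1 + exp (θ * I))).im)
      volume 0 (2 * π) :=
    ⟨hu.1.im, hu.2.im⟩
  rw [integral_congr_ae hsplit, integral_add hIm intervalIntegrable_const, him,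
    intervalIntegral.integral_const, sub_zero, smul_eq_mul]
  ring

theorem stmt19_general (f : ℂ → ℂ) (β C : ℝ) (hβ : 1 / 2 < β)
    (hd : DifferentiableOn ℂ f (ball (0 : ℂ) 1))
    (hHolder : ∀ z ∈ closedBall (0 : ℂ) 1, ∀ w ∈ closedBall (0 : ℂ) 1,
      ‖f z - f w‖ ≤ C * ‖z - w‖ ^ β)
    (hf0 : f 0 = 0) (hfm1 : (f (-1)).re = 0) :
    ((1 / (2 * π) : ℂ) * (∫ θ in (0 : ℝ)..(2 * π),
        (f (Complex.exp (θ * Complex.I)) - f (-1)) /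
          (1 + Complex.exp (θ * Complex.I))) = -f (-1)) ∧
    (f (-1) * (((1 / (2 * π)) * (∫ θ in (0 : ℝ)..(2 * π),
        ((1 : ℂ) / (1 + Complex.exp (θ * Complex.I))).re) : ℝ) : ℂ)
      = f (-1) / 2) ∧
    (Complex.I * (((1 / (2 * π)) * (∫ θ in (0 : ℝ)..(2 * π),
        (f (Complex.exp (θ * Complex.I)) /
          (1 + Complex.exp (θ * Complex.I))).im) : ℝ) : ℂ)
      = -f (-1) / 2) := by
  obtain ⟨K, hK⟩ : ∃ K, HolderOnWith K (1 / 2) f (closedBall 0 1) :=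
    HolderOnWith.exists_holderOnWith_of_le ⟨_, holderOnWith_of_norm_sub_le (by linarith) hHolder⟩
      (by rw [← NNReal.coe_le_coe, Real.coe_toNNReal _ (by linarith)]; norm_num; linarith)
      isBounded_closedBall
  have hmain := integral_sub_div_one_add_exp hd hK (by norm_num) (by norm_num)
  rw [hf0, zero_sub] at hmain
  have hπ : (π : ℂ) ≠ 0 := ofReal_ne_zero.2 pi_ne_zero
  refine ⟨?_, ?_, ?_⟩
  · rw [hmain]
    field_simp
  · rw [integral_re_one_div_one_add_exp]
    push_cast
    field_simp
  · rw [integral_im_div_one_add_exp hfm1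
      (intervalIntegrable_sub_div_one_add_exp hK (by norm_num) (by norm_num)), hmain,
      show 2 * π * -f (-1) = ((-(2 * π) : ℝ) : ℂ) * f (-1) by push_cast; ring, im_ofReal_mul]
    conv_rhs => rw [← re_add_im (f (-1)), hfm1]
    push_cast
    field_simp
    ring

/-- if `f` is holomorphic on the open unit disc, Hölder of
exponent `β > 1/2` on the closed disc, `f 0 = 0` and `Re (f (-1)) = 0`, then
`i·Im((1/2π)∫ f(e^{iθ})/(1+e^{iθ}) dθ) = -f(-1)/2`; more precisely
`(1/2π)∫ (f(ζ) - f(-1))/(1+ζ) dθ = -f(-1)` and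
`f(-1)·Re((1/2π)∫ 1/(1+e^{iθ}) dθ) = f(-1)/2` (where the real part of the
integrand `1/(1+e^{iθ})` is `1/2` a.e., `ζ = e^{iθ}`). -/
theorem stmt19 (f : ℂ → ℂ) (β C : ℝ) (hβ : 1 / 2 < β) (hβ1 : β < 1)
    (hd : DifferentiableOn ℂ f (ball (0 : ℂ) 1))
    (hHolder : ∀ z ∈ closedBall (0 : ℂ) 1, ∀ w ∈ closedBall (0 : ℂ) 1,
      ‖f z - f w‖ ≤ C * ‖z - w‖ ^ β)
    (hf0 : f 0 = 0) (hfm1 : (f (-1)).re = 0) :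
    ((1 / (2 * π) : ℂ) * (∫ θ in (0 : ℝ)..(2 * π),
        (f (Complex.exp (θ * Complex.I)) - f (-1)) /
          (1 + Complex.exp (θ * Complex.I))) = -f (-1)) ∧
    (f (-1) * (((1 / (2 * π)) * (∫ θ in (0 : ℝ)..(2 * π),
        ((1 : ℂ) / (1 + Complex.exp (θ * Complex.I))).re) : ℝ) : ℂ)
      = f (-1) / 2) ∧
    (Complex.I * (((1 / (2 * π)) * (∫ θ in (0 : ℝ)..(2 * π),
        (f (Complex.exp (θ * Complex.I)) /
          (1 + Complex.exp (θ * Complex.I))).im) : ℝ) : ℂ)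
      = -f (-1) / 2) :=
  stmt19_general f β C hβ hd hHolder hf0 hfm1
end
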